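/- arXiv:2510.20013 — 3 statements merged into one kernel-verified Lean document; each statement's English description precedes it below -/
import Mathlib

section
/- Let f : {-1,1}^5 → {-1,1} be defined by f(x) = sgn(x_1 - 3x_2 + x_3 - x_4 + 3x_5), and let Maj_5(x) = sgn(x_1 + x_2 + x_3 + x_4 + x_5). Then for p = 2/5, Φ_p(f) > Φ_p(Maj_5); that is, the 5-bit majority does not maximize Φ_{2/5} among unbiased Boolean functions. -/
open Finset

noncomputable section

/-- Sign function: `1` for positive arguments, `-1` otherwise. -/
def sgn (t : ℝ) : ℝ := if 0 < t then 1 else -1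

/-- Real value of a Boolean sign: `true ↦ 1`, `false ↦ -1`. -/
def val (b : Bool) : ℝ := if b then 1 else -1

/-- Fourier coefficient `f̂(S) = 2^{-n} ∑_{x ∈ {-1,1}^n} f(x) ∏_{i∈S} x_i`. -/
def fCoeff (n : ℕ) (f : (Fin n → ℝ) → ℝ) (S : Finset (Fin n)) : ℝ :=
  (2 ^ n : ℝ)⁻¹ * ∑ b : Fin n → Bool, f (fun i => val (b i)) * ∏ i ∈ S, val (b i)

/-- Multilinear extension `F(z) = ∑_S f̂(S) ∏_{i∈S} z_i`. -/
def mlin (n : ℕ) (f : (Fin n → ℝ) → ℝ) (z : Fin n → ℝ) : ℝ :=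
  ∑ S : Finset (Fin n), fCoeff n f S * ∏ i ∈ S, z i

/-- Value of an erasure symbol: `0 ↦ 0`, `1 ↦ 1`, `2 ↦ -1`. -/
def eval3 (k : Fin 3) : ℝ := if k = 0 then 0 else if k = 1 then 1 else -1

/-- Erasure weight: `Pr[z_i = 0] = 1 - p`, `Pr[z_i = 1] = Pr[z_i = -1] = p/2`. -/
def wt (p : ℝ) (k : Fin 3) : ℝ := if k = 0 then 1 - p else p / 2

/-- `Φ_p(f) = E_z |F(z)|` under the erasure distribution at rate `p`. -/
def Phi (n : ℕ) (p : ℝ) (f : (Fin n → ℝ) → ℝ) : ℝ :=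
  ∑ e : Fin n → Fin 3, (∏ i, wt p (e i)) * |mlin n f (fun i => eval3 (e i))|

/-- `f(x) = sgn(x₁ - 3x₂ + x₃ - x₄ + 3x₅)`. -/
def f5 (x : Fin 5 → ℝ) : ℝ := sgn (x 0 - 3 * x 1 + x 2 - x 3 + 3 * x 4)

/-- `Maj₅(x) = sgn(x₁ + x₂ + x₃ + x₄ + x₅)`. -/
def maj5 (x : Fin 5 → ℝ) : ℝ := sgn (x 0 + x 1 + x 2 + x 3 + x 4)

/-!
Expanding `∏ᵢ (1 + zᵢxᵢ) = ∑_S ∏_{i∈S} zᵢxᵢ` shows that the multilinear extension is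
`F(z) = 2⁻ⁿ ∑ₓ f(x) ∏ᵢ (1 + zᵢxᵢ)`, which gives the Fourier expansions of `f` and `Maj₅` in
closed form. `Φ_{2/5}` is then an exact rational sum over the `3⁵` erasure patterns:
`Φ_{2/5}(f) = 2689/6250 = 0.43024` while `Φ_{2/5}(Maj₅) = 5363/12500 = 0.42904`.
-/

lemma sum_pi_fin_succ {n : ℕ} {β M : Type*} [Fintype β] [AddCommMonoid M]
    (F : (Fin (n + 1) → β) → M) :
    ∑ g : Fin (n + 1) → β, F g = ∑ a : β, ∑ g : Fin n → β, F (Matrix.vecCons a g) := by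
  rw [← (Fin.consEquiv fun _ => β).sum_comp F, Fintype.sum_prod_type]
  rfl

lemma mlin_eq_sum_prod_one_add (n : ℕ) (f : (Fin n → ℝ) → ℝ) (z : Fin n → ℝ) :
    mlin n f z = (2 ^ n : ℝ)⁻¹ *
      ∑ b : Fin n → Bool, f (fun i => val (b i)) * ∏ i, (1 + z i * val (b i)) := by
  simp only [mlin, fCoeff, Finset.sum_mul, Finset.mul_sum, mul_assoc]
  rw [Finset.sum_comm]
  refine Finset.sum_congr rfl fun b _ => ?_
  simp only [← Finset.mul_sum, ← Finset.prod_mul_distrib]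
  rw [Finset.prod_one_add, Finset.powerset_univ]
  simp only [mul_comm (z _)]

lemma mlin_f5 (z : Fin 5 → ℝ) :
    mlin 5 f5 z = (1/4)*z 0 - (1/2)*z 1 + (1/4)*z 2 - (1/4)*z 3 + (1/2)*z 4
      + (1/4)*(z 0*z 2*z 3) + (1/4)*(z 0*z 1*z 4) + (1/4)*(z 1*z 2*z 4)
      - (1/4)*(z 1*z 3*z 4) + (1/4)*(z 0*z 1*z 2*z 3*z 4) := by
  rw [mlin_eq_sum_prod_one_add]
  simp only [sum_pi_fin_succ, Fintype.sum_unique, Fintype.sum_bool, f5, _root_.val, sgn,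
    Fin.prod_univ_five, Matrix.cons_val_zero, Matrix.cons_val_one, Matrix.cons_val_two,
    Matrix.cons_val_three, Matrix.cons_val_four, if_true]
  norm_num
  ring

lemma mlin_maj5 (z : Fin 5 → ℝ) :
    mlin 5 maj5 z = (3/8)*(z 0 + z 1 + z 2 + z 3 + z 4)
      - (1/8)*(z 0*z 1*z 2 + z 0*z 1*z 3 + z 0*z 2*z 3 + z 1*z 2*z 3
        + z 0*z 1*z 4 + z 0*z 2*z 4 + z 1*z 2*z 4 + z 0*z 3*z 4
        + z 1*z 3*z 4 + z 2*z 3*z 4)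
      + (3/8)*(z 0*z 1*z 2*z 3*z 4) := by
  rw [mlin_eq_sum_prod_one_add]
  simp only [sum_pi_fin_succ, Fintype.sum_unique, Fintype.sum_bool, maj5, _root_.val, sgn,
    Fin.prod_univ_five, Matrix.cons_val_zero, Matrix.cons_val_one, Matrix.cons_val_two,
    Matrix.cons_val_three, Matrix.cons_val_four, if_true]
  norm_num
  ring

-- Unfolding `eval3` and `wt` instead leaves tests `(2 : Fin 3) = 0` that `norm_num` does not decide.
lemma eval3_zero : eval3 0 = 0 := rfl
lemma eval3_one : eval3 1 = 1 := rfl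
lemma eval3_two : eval3 2 = -1 := rfl
lemma wt_zero (p : ℝ) : wt p 0 = 1 - p := rfl
lemma wt_one (p : ℝ) : wt p 1 = p / 2 := rfl
lemma wt_two (p : ℝ) : wt p 2 = p / 2 := rfl

lemma Phi_two_fifths_f5 : Phi 5 (2/5) f5 = 2689/6250 := by
  simp only [Phi, sum_pi_fin_succ, Fintype.sum_unique, Fin.sum_univ_three, mlin_f5,
    Fin.prod_univ_five, Matrix.cons_val_zero, Matrix.cons_val_one, Matrix.cons_val_two,
    Matrix.cons_val_three, Matrix.cons_val_four, Matrix.head_cons, Matrix.tail_cons,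
    eval3_zero, eval3_one, eval3_two, wt_zero, wt_one, wt_two]
  norm_num

lemma Phi_two_fifths_maj5 : Phi 5 (2/5) maj5 = 5363/12500 := by
  simp only [Phi, sum_pi_fin_succ, Fintype.sum_unique, Fin.sum_univ_three, mlin_maj5,
    Fin.prod_univ_five, Matrix.cons_val_zero, Matrix.cons_val_one, Matrix.cons_val_two,
    Matrix.cons_val_three, Matrix.cons_val_four, Matrix.head_cons, Matrix.tail_cons,
    eval3_zero, eval3_one, eval3_two, wt_zero, wt_one, wt_two]
  norm_num

theorem stmt0 : Phi 5 (2/5) f5 > Phi 5 (2/5) maj5 := by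
  rw [Phi_two_fifths_f5, Phi_two_fifths_maj5]
  norm_num
end
end

section
/- For every n ≥ 1, every p ∈ [0,1], and every unbiased Boolean function f : {-1,1}^n → {-1,1}, one has |Φ_p(f) - p·Σ_{i=1}^n |f̂({i})|| ≤ ((n-1)·√n + C(n,2))·p², where C(n,2) = n(n-1)/2. -/
open Finset

noncomputable section

lemma sum_pi_prod {n : ℕ} {α : Type} [Fintype α] [DecidableEq α] (h : Fin n → α → ℝ) :
    ∑ e : Fin n → α, ∏ i, h i (e i) = ∏ i, ∑ k, h i k := by
  rw [Finset.prod_univ_sum]; simp [Fintype.piFinset_univ]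

lemma prod_if_two {n : ℕ} {i j : Fin n} (hij : i ≠ j) (A B : Fin n → ℝ) :
    (∏ k, (if k = i then A k else if k = j then B k else 1)) = A i * B j := by
  have : ∀ k : Fin n, (if k = i then A k else if k = j then B k else 1)
      = (if k = i then A k else 1) * (if k = j then B k else 1) := by
    intro k
    by_cases h1 : k = i <;> by_cases h2 : k = j
    · exact absurd (h1 ▸ h2) hij
    · simp [h1, h2, hij]
    · simp [h1, h2, Ne.symm hij]
    · simp [h1, h2]
  rw [Finset.prod_congr rfl (fun k _ => this k), Finset.prod_mul_distrib,
    Finset.prod_ite_eq', Finset.prod_ite_eq']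
  simp

lemma aval (v : Fin 3) : |eval3 v| = if v = 0 then 0 else 1 := by
  fin_cases v <;> simp [eval3]

lemma wt_nonneg {p : ℝ} (hp : p ∈ Set.Icc (0:ℝ) 1) (k : Fin 3) : 0 ≤ wt p k := by
  obtain ⟨h0, h1⟩ := hp
  fin_cases k <;> simp [wt] <;> linarith

lemma sum_wt {p : ℝ} : ∑ v : Fin 3, wt p v = 1 := by
  rw [Fin.sum_univ_three]; norm_num [wt, Fin.ext_iff]; ring

lemma sum_wt_a {p : ℝ} : ∑ v : Fin 3, wt p v * |eval3 v| = p := by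
  rw [Fin.sum_univ_three]; norm_num [wt, eval3, Fin.ext_iff]

lemma coordSum {n : ℕ} {p : ℝ} (i : Fin n) :
    ∑ e : Fin n → Fin 3, (∏ k, wt p (e k)) * |eval3 (e i)| = p := by
  have h1 : ∀ e : Fin n → Fin 3, (∏ k, wt p (e k)) * |eval3 (e i)|
      = ∏ k, (wt p (e k) * (if k = i then |eval3 (e k)| else 1)) := by
    intro e
    rw [Finset.prod_mul_distrib, Finset.prod_ite_eq']
    simp
  rw [Finset.sum_congr rfl (fun e _ => h1 e),
    sum_pi_prod (fun k v => wt p v * (if k = i then |eval3 v| else 1))]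
  have h2 : ∀ k : Fin n, (∑ v : Fin 3, wt p v * (if k = i then |eval3 v| else 1))
      = if k = i then p else 1 := by
    intro k
    by_cases h : k = i <;> simp [h, sum_wt_a, sum_wt]
  rw [Finset.prod_congr rfl (fun k _ => h2 k), Finset.prod_ite_eq']
  simp

lemma pairSum {n : ℕ} {p : ℝ} {i j : Fin n} (hij : i ≠ j) :
    ∑ e : Fin n → Fin 3, (∏ k, wt p (e k)) * |eval3 (e i)| * |eval3 (e j)| = p ^ 2 := by
  have h1 : ∀ e : Fin n → Fin 3, (∏ k, wt p (e k)) * |eval3 (e i)| * |eval3 (e j)|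
      = ∏ k, (wt p (e k) * ((if k = i then |eval3 (e k)| else 1) * (if k = j then |eval3 (e k)| else 1))) := by
    intro e
    rw [Finset.prod_mul_distrib, Finset.prod_mul_distrib, Finset.prod_ite_eq', Finset.prod_ite_eq']
    simp; ring
  rw [Finset.sum_congr rfl (fun e _ => h1 e),
    sum_pi_prod (fun k v => wt p v * ((if k = i then |eval3 v| else 1) * (if k = j then |eval3 v| else 1)))]
  have h2 : ∀ k : Fin n, (∑ v : Fin 3, wt p v * ((if k = i then |eval3 v| else 1) * (if k = j then |eval3 v| else 1)))
      = if k = i then p else if k = j then p else 1 := by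
    intro k
    by_cases h : k = i
    · subst h
      simp [hij, sum_wt_a]
    · by_cases h' : k = j <;> simp [h, h', Ne.symm hij, sum_wt_a, sum_wt]
  rw [Finset.prod_congr rfl (fun k _ => h2 k), prod_if_two hij]
  ring

lemma orth {n : ℕ} (i j : Fin n) :
    ∑ b : Fin n → Bool, val (b i) * val (b j) = if i = j then (2:ℝ)^n else 0 := by
  by_cases h : i = j
  · subst h
    have : ∀ b : Fin n → Bool, val (b i) * val (b i) = 1 := by
      intro b; rcases Bool.dichotomy (b i) with h'|h' <;> simp [_root_.val, h']
    rw [Finset.sum_congr rfl (fun b _ => this b)]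
    simp [Finset.card_univ]
  · simp only [h, if_false]
    have h1 : ∀ b : Fin n → Bool, val (b i) * val (b j)
        = ∏ k, (if k = i then val (b k) else if k = j then val (b k) else 1) := by
      intro b; rw [prod_if_two h]
    rw [Finset.sum_congr rfl (fun b _ => h1 b)]
    have := sum_pi_prod (α := Bool) (n := n)
      (fun k v => if k = i then val v else if k = j then val v else 1)
    rw [this]
    apply Finset.prod_eq_zero (Finset.mem_univ i)
    simp [_root_.val]

lemma sum_prod_subsets {n : ℕ} (c : Fin n → ℝ) :
    ∑ S : Finset (Fin n), ∏ i ∈ S, c i = ∏ i, (1 + c i) := by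
  have h := Finset.prod_add (fun i => c i) (fun _ => (1:ℝ)) (univ : Finset (Fin n))
  simp only [Finset.prod_const_one, mul_one] at h
  rw [Finset.powerset_univ] at h
  rw [show (∏ i, (1 + c i)) = ∏ i, (c i + 1) from
    Finset.prod_congr rfl (fun i _ => add_comm _ _), h]

lemma mlin_avg {n : ℕ} (f : (Fin n → ℝ) → ℝ) (z : Fin n → ℝ) :
    mlin n f z = (2^n : ℝ)⁻¹ * ∑ b : Fin n → Bool,
      f (fun i => _root_.val (b i)) * ∏ i, (1 + z i * _root_.val (b i)) := by
  simp only [mlin, fCoeff]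
  have step1 : ∀ S : Finset (Fin n),
      ((2^n:ℝ)⁻¹ * ∑ b : Fin n → Bool,
          f (fun i => _root_.val (b i)) * ∏ i ∈ S, _root_.val (b i)) * ∏ i ∈ S, z i
      = ∑ b : Fin n → Bool, (2^n:ℝ)⁻¹ *
          (f (fun i => _root_.val (b i)) * ∏ i ∈ S, (z i * _root_.val (b i))) := by
    intro S
    rw [mul_assoc, Finset.sum_mul, Finset.mul_sum]
    refine Finset.sum_congr rfl fun b _ => ?_
    rw [Finset.prod_mul_distrib]
    ring
  rw [Finset.sum_congr rfl (fun S _ => step1 S), Finset.sum_comm, Finset.mul_sum]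
  refine Finset.sum_congr rfl fun b _ => ?_
  rw [← sum_prod_subsets (fun i => z i * _root_.val (b i)), Finset.mul_sum,
    Finset.mul_sum]

lemma abs_val (v : Bool) : |_root_.val v| = 1 := by
  rcases Bool.dichotomy v with h|h <;> simp [_root_.val, h]

lemma mlin_abs_le_one {n : ℕ} (f : (Fin n → ℝ) → ℝ)
    (hbool : ∀ b : Fin n → Bool, f (fun i => val (b i)) = 1 ∨ f (fun i => val (b i)) = -1)
    (z : Fin n → ℝ) (hz : ∀ i, |z i| ≤ 1) : |mlin n f z| ≤ 1 := by
  rw [mlin_avg]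
  have hfac : ∀ (b : Fin n → Bool) (i : Fin n), 0 ≤ 1 + z i * _root_.val (b i) := by
    intro b i
    have h1 : |z i * _root_.val (b i)| ≤ 1 := by
      rw [abs_mul, abs_val, mul_one]; exact hz i
    nlinarith [abs_le.mp h1]
  have hprod : ∀ b : Fin n → Bool, (0:ℝ) ≤ ∏ i, (1 + z i * _root_.val (b i)) :=
    fun b => Finset.prod_nonneg fun i _ => hfac b i
  have habsf : ∀ b : Fin n → Bool, |f (fun i => _root_.val (b i))| = 1 := by
    intro b; rcases hbool b with h|h <;> rw [h] <;> norm_num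
  have hsum : ∑ b : Fin n → Bool, ∏ i, (1 + z i * _root_.val (b i)) = 2^n := by
    rw [sum_pi_prod (fun i v => 1 + z i * _root_.val v)]
    have : ∀ i : Fin n, ∑ v : Bool, (1 + z i * _root_.val v) = 2 := by
      intro i
      rw [Fintype.sum_bool]
      simp [_root_.val]; ring
    rw [Finset.prod_congr rfl (fun i _ => this i)]
    simp
  have hb : |∑ b : Fin n → Bool,
      f (fun i => _root_.val (b i)) * ∏ i, (1 + z i * _root_.val (b i))| ≤ 2^n := by
    refine (Finset.abs_sum_le_sum_abs _ _).trans ?_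
    rw [← hsum]
    refine Finset.sum_le_sum fun b _ => ?_
    rw [abs_mul, habsf b, one_mul, abs_of_nonneg (hprod b)]
  rw [abs_mul, abs_of_nonneg (by positivity : (0:ℝ) ≤ ((2:ℝ)^n)⁻¹)]
  calc ((2:ℝ)^n)⁻¹ * |∑ b : Fin n → Bool,
        f (fun i => _root_.val (b i)) * ∏ i, (1 + z i * _root_.val (b i))|
      ≤ ((2:ℝ)^n)⁻¹ * 2^n := by
        exact mul_le_mul_of_nonneg_left hb (by positivity)
    _ = 1 := by
        rw [inv_mul_cancel₀ (by positivity)]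

lemma hatone {n : ℕ} (f : (Fin n → ℝ) → ℝ) (i : Fin n) :
    ∑ b : Fin n → Bool, f (fun j => _root_.val (b j)) * _root_.val (b i)
      = 2^n * fCoeff n f {i} := by
  simp only [fCoeff, Finset.prod_singleton]
  rw [← mul_assoc, mul_inv_cancel₀ (by positivity : ((2:ℝ)^n) ≠ 0), one_mul]

lemma bessel {n : ℕ} (f : (Fin n → ℝ) → ℝ)
    (hbool : ∀ b : Fin n → Bool, f (fun i => val (b i)) = 1 ∨ f (fun i => val (b i)) = -1) :
    ∑ i : Fin n, (fCoeff n f {i})^2 ≤ 1 := by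
  set F : (Fin n → Bool) → ℝ := fun b => f (fun i => _root_.val (b i)) with hF
  set c : Fin n → ℝ := fun i => fCoeff n f {i} with hc
  have key : (0:ℝ) ≤ ∑ b : Fin n → Bool, (F b - ∑ i, c i * _root_.val (b i))^2 :=
    Finset.sum_nonneg fun b _ => sq_nonneg _
  have stepA : ∀ b : Fin n → Bool,
      (F b - ∑ i, c i * _root_.val (b i))^2
      = F b^2 - 2 * (∑ i, c i * (F b * _root_.val (b i)))
        + ∑ i, ∑ j, (c i * c j) * (_root_.val (b i) * _root_.val (b j)) := by
    intro b
    have h2 : (∑ i, c i * _root_.val (b i))^2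
        = ∑ i, ∑ j, (c i * c j) * (_root_.val (b i) * _root_.val (b j)) := by
      rw [sq, Finset.sum_mul_sum]
      exact Finset.sum_congr rfl fun i _ => Finset.sum_congr rfl fun j _ => by ring
    rw [sub_sq, h2, Finset.mul_sum, Finset.mul_sum]
    congr 1
    congr 1
    exact Finset.sum_congr rfl fun i _ => by ring
  rw [Finset.sum_congr rfl (fun b _ => stepA b)] at key
  rw [Finset.sum_add_distrib, Finset.sum_sub_distrib] at key
  have e1 : ∑ b : Fin n → Bool, F b^2 = 2^n := by
    have : ∀ b : Fin n → Bool, F b^2 = 1 := by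
      intro b; rcases hbool b with h|h <;> simp only [hF] <;> rw [h] <;> norm_num
    rw [Finset.sum_congr rfl (fun b _ => this b)]
    simp [Finset.card_univ]
  have e2 : ∑ b : Fin n → Bool, 2 * (∑ i, c i * (F b * _root_.val (b i)))
      = 2 * (2^n * ∑ i, (c i)^2) := by
    rw [← Finset.mul_sum, Finset.sum_comm]
    congr 1
    rw [Finset.mul_sum]
    refine Finset.sum_congr rfl fun i _ => ?_
    rw [← Finset.mul_sum, hatone f i]
    have hx : fCoeff n f {i} = c i := rfl
    rw [hx]; ring
  have e3 : ∑ b : Fin n → Bool, ∑ i, ∑ j,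
        (c i * c j) * (_root_.val (b i) * _root_.val (b j))
      = 2^n * ∑ i, (c i)^2 := by
    rw [Finset.sum_comm]
    have inner : ∀ i : Fin n, ∑ b : Fin n → Bool, ∑ j,
          (c i * c j) * (_root_.val (b i) * _root_.val (b j))
        = 2^n * (c i)^2 := by
      intro i
      rw [Finset.sum_comm]
      have hj : ∀ j : Fin n, ∑ b : Fin n → Bool,
            (c i * c j) * (_root_.val (b i) * _root_.val (b j))
          = if i = j then 2^n * (c i)^2 else 0 := by
        intro j
        rw [← Finset.mul_sum, orth i j]
        by_cases h : i = j <;> simp [h] <;> ring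
      rw [Finset.sum_congr rfl (fun j _ => hj j), Finset.sum_ite_eq univ i
        (fun _ => (2:ℝ)^n * (c i)^2)]
      simp
    rw [Finset.sum_congr rfl (fun i _ => inner i), ← Finset.mul_sum]
  rw [e1, e2, e3] at key
  have h2n : (0:ℝ) < 2^n := by positivity
  nlinarith [key]

lemma l1bound {n : ℕ} (f : (Fin n → ℝ) → ℝ)
    (hbool : ∀ b : Fin n → Bool, f (fun i => val (b i)) = 1 ∨ f (fun i => val (b i)) = -1) :
    ∑ i : Fin n, |fCoeff n f {i}| ≤ Real.sqrt n := by
  have hcs := Finset.sum_mul_sq_le_sq_mul_sq univ (fun _ => (1:ℝ))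
    (fun i => |fCoeff n f {i}|)
  simp only [one_mul, one_pow, Finset.sum_const, Finset.card_univ, Fintype.card_fin,
    nsmul_eq_mul, mul_one, sq_abs] at hcs
  have hb := bessel f hbool
  have h1 : (∑ i : Fin n, |fCoeff n f {i}|)^2 ≤ (n : ℝ) := by
    calc (∑ i : Fin n, |fCoeff n f {i}|)^2
        ≤ (n:ℝ) * ∑ i : Fin n, (fCoeff n f {i})^2 := hcs
      _ ≤ (n:ℝ) * 1 := by
          exact mul_le_mul_of_nonneg_left hb (Nat.cast_nonneg n)
      _ = (n:ℝ) := mul_one _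
  have hnn : (0:ℝ) ≤ ∑ i : Fin n, |fCoeff n f {i}| :=
    Finset.sum_nonneg fun i _ => abs_nonneg _
  nlinarith [Real.sq_sqrt (Nat.cast_nonneg n : (0:ℝ) ≤ n),
    Real.sqrt_nonneg (n:ℝ)]

lemma fCoeff_empty {n : ℕ} (f : (Fin n → ℝ) → ℝ)
    (hunb : ∑ b : Fin n → Bool, f (fun i => val (b i)) = 0) :
    fCoeff n f ∅ = 0 := by
  simp [fCoeff, hunb]

lemma mlin_single {n : ℕ} (f : (Fin n → ℝ) → ℝ)
    (z : Fin n → ℝ) (i0 : Fin n) (hz : ∀ j, j ≠ i0 → z j = 0) :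
    mlin n f z = fCoeff n f ∅ + fCoeff n f {i0} * z i0 := by
  unfold mlin
  have h0 : ∀ S ∈ (univ : Finset (Finset (Fin n))), S ∉ ({i0} : Finset (Fin n)).powerset →
      fCoeff n f S * ∏ j ∈ S, z j = 0 := by
    intro S _ hS
    rw [Finset.mem_powerset] at hS
    obtain ⟨j, hjS, hji0⟩ := Finset.not_subset.mp hS
    have : z j = 0 := hz j (by simpa using hji0)
    rw [Finset.prod_eq_zero hjS this, mul_zero]
  rw [← Finset.sum_subset (Finset.subset_univ _) h0]
  have hps : ({i0} : Finset (Fin n)).powerset = {∅, {i0}} := rfl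
  rw [hps, Finset.sum_insert (by
    intro h
    rw [Finset.mem_singleton] at h
    exact (Finset.singleton_ne_empty i0) h.symm), Finset.sum_singleton]
  simp

lemma dev_bound {n : ℕ} (hn : 1 ≤ n) (f : (Fin n → ℝ) → ℝ)
    (hbool : ∀ b : Fin n → Bool, f (fun i => val (b i)) = 1 ∨ f (fun i => val (b i)) = -1)
    (hunb : ∑ b : Fin n → Bool, f (fun i => val (b i)) = 0) (e : Fin n → Fin 3) :
    abs (|mlin n f (fun i => eval3 (e i))| - ∑ i, |fCoeff n f {i}| * |eval3 (e i)|)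
      ≤ ∑ i, ∑ j ∈ univ.erase i,
          (1/2 + |fCoeff n f {i}|) * (|eval3 (e i)| * |eval3 (e j)|) := by
  have ha1 : ∀ i, e i ≠ 0 → |eval3 (e i)| = 1 := fun i h => by rw [aval]; simp [h]
  have ha0 : ∀ i, e i = 0 → |eval3 (e i)| = 0 := fun i h => by rw [aval]; simp [h]
  have hann : ∀ i, (0:ℝ) ≤ |eval3 (e i)| := fun i => abs_nonneg _
  have hcnn : ∀ i : Fin n, (0:ℝ) ≤ 1/2 + |fCoeff n f {i}| := by
    intro i; have := abs_nonneg (fCoeff n f {i}); linarith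
  have hMnn : (0:ℝ) ≤ ∑ i, |fCoeff n f {i}| * |eval3 (e i)| :=
    Finset.sum_nonneg fun i _ => mul_nonneg (abs_nonneg _) (hann i)
  have hBnn : (0:ℝ) ≤ ∑ i, ∑ j ∈ univ.erase i,
      (1/2 + |fCoeff n f {i}|) * (|eval3 (e i)| * |eval3 (e j)|) :=
    Finset.sum_nonneg fun i _ => Finset.sum_nonneg fun j _ =>
      mul_nonneg (hcnn i) (mul_nonneg (hann i) (hann j))
  set s := univ.filter (fun i => e i ≠ 0) with hs
  by_cases h2 : 2 ≤ s.card
  · obtain ⟨i0, hi0, j0, hj0, hne⟩ := Finset.one_lt_card.mp (by omega : 1 < s.card)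
    have hei0 : e i0 ≠ 0 := (Finset.mem_filter.mp hi0).2
    have hej0 : e j0 ≠ 0 := (Finset.mem_filter.mp hj0).2
    have hF1 : |mlin n f (fun i => eval3 (e i))| ≤ 1 := by
      refine mlin_abs_le_one f hbool _ fun i => ?_
      rw [aval]; split <;> norm_num
    -- split B into the 1/2 part and the |c| part
    have hsplit : ∑ i, ∑ j ∈ univ.erase i,
          (1/2 + |fCoeff n f {i}|) * (|eval3 (e i)| * |eval3 (e j)|)
        = (∑ i, ∑ j ∈ univ.erase i, (1/2:ℝ) * (|eval3 (e i)| * |eval3 (e j)|))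
          + ∑ i, ∑ j ∈ univ.erase i, |fCoeff n f {i}| * (|eval3 (e i)| * |eval3 (e j)|) := by
      rw [← Finset.sum_add_distrib]
      refine Finset.sum_congr rfl fun i _ => ?_
      rw [← Finset.sum_add_distrib]
      exact Finset.sum_congr rfl fun j _ => by ring
    have hg : ∀ i j : Fin n, j ≠ i → e i ≠ 0 → e j ≠ 0 →
        (1/2:ℝ) ≤ ∑ j' ∈ univ.erase i, (1/2:ℝ) * (|eval3 (e i)| * |eval3 (e j')|) := by
      intro i j hji hei hej
      have hmem : j ∈ univ.erase i := Finset.mem_erase.mpr ⟨hji, Finset.mem_univ j⟩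
      refine le_trans ?_ (Finset.single_le_sum
        (f := fun j' => (1/2:ℝ) * (|eval3 (e i)| * |eval3 (e j')|))
        (fun j' _ => by positivity) hmem)
      simp only [ha1 j hej, ha1 i hei]
      norm_num
    have h1le : (1:ℝ) ≤ ∑ i, ∑ j ∈ univ.erase i, (1/2:ℝ) * (|eval3 (e i)| * |eval3 (e j)|) := by
      have hsub : ∑ i ∈ ({i0, j0} : Finset (Fin n)),
            (∑ j ∈ univ.erase i, (1/2:ℝ) * (|eval3 (e i)| * |eval3 (e j)|))
          ≤ ∑ i : Fin n, ∑ j ∈ univ.erase i, (1/2:ℝ) * (|eval3 (e i)| * |eval3 (e j)|) :=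
        Finset.sum_le_sum_of_subset_of_nonneg (Finset.subset_univ _)
          (fun i _ _ => Finset.sum_nonneg fun j _ => by positivity)
      rw [Finset.sum_pair hne] at hsub
      have g1 := hg i0 j0 hne.symm hei0 hej0
      have g2 := hg j0 i0 hne hej0 hei0
      linarith
    have hMle : (∑ i, |fCoeff n f {i}| * |eval3 (e i)|)
        ≤ ∑ i, ∑ j ∈ univ.erase i, |fCoeff n f {i}| * (|eval3 (e i)| * |eval3 (e j)|) := by
      refine Finset.sum_le_sum fun i _ => ?_
      by_cases hi : e i = 0
      · rw [ha0 i hi, mul_zero]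
        exact Finset.sum_nonneg fun j _ => by positivity
      · set j1 := if i = i0 then j0 else i0 with hj1
        have hj1i : j1 ≠ i ∧ e j1 ≠ 0 := by
          by_cases h : i = i0
          · subst h; simp only [hj1, if_pos rfl]; exact ⟨hne.symm, hej0⟩
          · simp only [hj1, if_neg h]; exact ⟨fun hh => h hh.symm, hei0⟩
        have hmem : j1 ∈ univ.erase i := Finset.mem_erase.mpr ⟨hj1i.1, Finset.mem_univ _⟩
        refine le_trans ?_ (Finset.single_le_sum
          (f := fun j' => |fCoeff n f {i}| * (|eval3 (e i)| * |eval3 (e j')|))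
          (fun j' _ => by positivity) hmem)
        simp only [ha1 j1 hj1i.2]
        norm_num
    rw [hsplit, abs_sub_le_iff]
    constructor <;> linarith [abs_nonneg (mlin n f (fun i => eval3 (e i)))]
  · have hcard : s.card ≤ 1 := by omega
    suffices hEq : |mlin n f (fun i => eval3 (e i))|
        = ∑ i, |fCoeff n f {i}| * |eval3 (e i)| by
      rw [hEq, sub_self, abs_zero]; exact hBnn
    rcases Nat.le_one_iff_eq_zero_or_eq_one.mp hcard with h0 | h1
    · have hall : ∀ i, e i = 0 := by
        intro i
        by_contra hcon
        have : i ∈ s := Finset.mem_filter.mpr ⟨Finset.mem_univ i, hcon⟩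
        rw [Finset.card_eq_zero.mp h0] at this
        exact absurd this (Finset.notMem_empty i)
      have i0 : Fin n := ⟨0, hn⟩
      have hF : mlin n f (fun i => eval3 (e i)) = 0 := by
        rw [mlin_single f _ i0 (fun j _ => by rw [hall j]; simp [eval3])]
        rw [fCoeff_empty f hunb, hall i0]
        simp [eval3]
      rw [hF, abs_zero]
      symm
      refine Finset.sum_eq_zero fun i _ => ?_
      rw [ha0 i (hall i), mul_zero]
    · obtain ⟨i0, hsi⟩ := Finset.card_eq_one.mp h1
      have hei0 : e i0 ≠ 0 := by
        have : i0 ∈ s := hsi ▸ Finset.mem_singleton_self i0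
        exact (Finset.mem_filter.mp this).2
      have hothers : ∀ j, j ≠ i0 → e j = 0 := by
        intro j hj
        by_contra hcon
        have : j ∈ s := Finset.mem_filter.mpr ⟨Finset.mem_univ j, hcon⟩
        rw [hsi, Finset.mem_singleton] at this
        exact hj this
      have hF : mlin n f (fun i => eval3 (e i)) = fCoeff n f {i0} * eval3 (e i0) := by
        rw [mlin_single f _ i0 (fun j hj => by rw [hothers j hj]; simp [eval3])]
        rw [fCoeff_empty f hunb, zero_add]
      rw [hF, abs_mul]
      symm
      rw [Finset.sum_eq_single_of_mem i0 (Finset.mem_univ i0)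
        (fun j _ hj => by rw [ha0 j (hothers j hj), mul_zero])]

lemma B_total {n : ℕ} (hn : 1 ≤ n) (p : ℝ) (f : (Fin n → ℝ) → ℝ) :
    ∑ e : Fin n → Fin 3, (∏ k, wt p (e k)) * ∑ i, ∑ j ∈ univ.erase i,
        (1/2 + |fCoeff n f {i}|) * (|eval3 (e i)| * |eval3 (e j)|)
      = ((n:ℝ) * ((n:ℝ)-1) / 2 + ((n:ℝ)-1) * ∑ i, |fCoeff n f {i}|) * p^2 := by
  have h1 : ∀ e : Fin n → Fin 3, (∏ k, wt p (e k)) * ∑ i, ∑ j ∈ univ.erase i,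
        (1/2 + |fCoeff n f {i}|) * (|eval3 (e i)| * |eval3 (e j)|)
      = ∑ i, ∑ j ∈ univ.erase i, (1/2 + |fCoeff n f {i}|) *
          ((∏ k, wt p (e k)) * |eval3 (e i)| * |eval3 (e j)|) := by
    intro e
    rw [Finset.mul_sum]
    refine Finset.sum_congr rfl fun i _ => ?_
    rw [Finset.mul_sum]
    exact Finset.sum_congr rfl fun j _ => by ring
  rw [Finset.sum_congr rfl fun e _ => h1 e, Finset.sum_comm]
  have h2 : ∀ i : Fin n, (∑ e : Fin n → Fin 3, ∑ j ∈ univ.erase i,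
        (1/2 + |fCoeff n f {i}|) * ((∏ k, wt p (e k)) * |eval3 (e i)| * |eval3 (e j)|))
      = ((n:ℝ) - 1) * ((1/2 + |fCoeff n f {i}|) * p^2) := by
    intro i
    rw [Finset.sum_comm]
    have h3 : ∀ j ∈ univ.erase i, (∑ e : Fin n → Fin 3,
          (1/2 + |fCoeff n f {i}|) * ((∏ k, wt p (e k)) * |eval3 (e i)| * |eval3 (e j)|))
        = (1/2 + |fCoeff n f {i}|) * p^2 := by
      intro j hj
      have hij : i ≠ j := fun h => (Finset.mem_erase.mp hj).1 h.symm
      rw [← Finset.mul_sum, pairSum hij]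
    rw [Finset.sum_congr rfl h3, Finset.sum_const, Finset.card_erase_of_mem (Finset.mem_univ i),
      Finset.card_univ, Fintype.card_fin, nsmul_eq_mul, Nat.cast_sub hn, Nat.cast_one]
  rw [Finset.sum_congr rfl fun i _ => h2 i, ← Finset.mul_sum]
  have h4 : ∑ i : Fin n, (1/2 + |fCoeff n f {i}|) * p^2
      = ((n:ℝ)/2 + ∑ i : Fin n, |fCoeff n f {i}|) * p^2 := by
    rw [← Finset.sum_mul, Finset.sum_add_distrib, Finset.sum_const, Finset.card_univ,
      Fintype.card_fin, nsmul_eq_mul]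
    ring
  rw [h4]
  ring

theorem stmt3 (n : ℕ) (hn : 1 ≤ n) (p : ℝ) (hp : p ∈ Set.Icc (0 : ℝ) 1)
    (f : (Fin n → ℝ) → ℝ)
    (hbool : ∀ b : Fin n → Bool, f (fun i => val (b i)) = 1 ∨ f (fun i => val (b i)) = -1)
    (hunb : ∑ b : Fin n → Bool, f (fun i => val (b i)) = 0) :
    abs (Phi n p f - p * ∑ i : Fin n, |fCoeff n f {i}|)
      ≤ (((n : ℝ) - 1) * Real.sqrt n + (n : ℝ) * ((n : ℝ) - 1) / 2) * p ^ 2 := by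
  obtain ⟨hp0, hp1⟩ := hp
  have hw : ∀ e : Fin n → Fin 3, 0 ≤ ∏ k, wt p (e k) :=
    fun e => Finset.prod_nonneg fun k _ => wt_nonneg ⟨hp0, hp1⟩ _
  have hMtot : ∑ e : Fin n → Fin 3,
        (∏ k, wt p (e k)) * ∑ i, |fCoeff n f {i}| * |eval3 (e i)|
      = p * ∑ i, |fCoeff n f {i}| := by
    have h1 : ∀ e : Fin n → Fin 3,
        (∏ k, wt p (e k)) * ∑ i, |fCoeff n f {i}| * |eval3 (e i)|
        = ∑ i, |fCoeff n f {i}| * ((∏ k, wt p (e k)) * |eval3 (e i)|) := by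
      intro e
      rw [Finset.mul_sum]
      exact Finset.sum_congr rfl fun i _ => by ring
    rw [Finset.sum_congr rfl fun e _ => h1 e, Finset.sum_comm, Finset.mul_sum]
    refine Finset.sum_congr rfl fun i _ => ?_
    rw [← Finset.mul_sum, coordSum i]
    ring
  have key : Phi n p f - p * ∑ i, |fCoeff n f {i}|
      = ∑ e : Fin n → Fin 3, (∏ k, wt p (e k)) *
          (|mlin n f fun i => eval3 (e i)| - ∑ i, |fCoeff n f {i}| * |eval3 (e i)|) := by
    rw [← hMtot]
    simp only [Phi]
    rw [← Finset.sum_sub_distrib]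
    exact Finset.sum_congr rfl fun e _ => by ring
  rw [key]
  have hl1 := l1bound f hbool
  have hn1 : (0:ℝ) ≤ (n:ℝ) - 1 := by
    have : (1:ℝ) ≤ (n:ℝ) := by exact_mod_cast hn
    linarith
  have hp2 : (0:ℝ) ≤ p^2 := sq_nonneg p
  calc abs (∑ e : Fin n → Fin 3, (∏ k, wt p (e k)) *
          (|mlin n f fun i => eval3 (e i)| - ∑ i, |fCoeff n f {i}| * |eval3 (e i)|))
      ≤ ∑ e : Fin n → Fin 3, abs ((∏ k, wt p (e k)) *
          (|mlin n f fun i => eval3 (e i)| - ∑ i, |fCoeff n f {i}| * |eval3 (e i)|)) :=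
        Finset.abs_sum_le_sum_abs _ _
    _ = ∑ e : Fin n → Fin 3, (∏ k, wt p (e k)) *
          abs (|mlin n f fun i => eval3 (e i)| - ∑ i, |fCoeff n f {i}| * |eval3 (e i)|) := by
        refine Finset.sum_congr rfl fun e _ => ?_
        rw [abs_mul, abs_of_nonneg (hw e)]
    _ ≤ ∑ e : Fin n → Fin 3, (∏ k, wt p (e k)) * ∑ i, ∑ j ∈ univ.erase i,
          (1/2 + |fCoeff n f {i}|) * (|eval3 (e i)| * |eval3 (e j)|) :=
        Finset.sum_le_sum fun e _ =>
          mul_le_mul_of_nonneg_left (dev_bound hn f hbool hunb e) (hw e)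
    _ = ((n:ℝ) * ((n:ℝ)-1) / 2 + ((n:ℝ)-1) * ∑ i, |fCoeff n f {i}|) * p^2 :=
        B_total hn p f
    _ ≤ (((n : ℝ) - 1) * Real.sqrt n + (n : ℝ) * ((n : ℝ) - 1) / 2) * p ^ 2 := by
        have h := mul_le_mul_of_nonneg_right
          (mul_le_mul_of_nonneg_left hl1 hn1) hp2
        nlinarith [h]
end
end

section
/- For all p ∈ [0,1], with z drawn from the erasure distribution at rate p on {-1,0,1}^5 and F the multilinear extension of Maj_5(x) = sgn(x_1 + ⋯ + x_5), one has E|F(z)| = (15/8)p - (15/4)p² + (25/4)p³ - (45/8)p⁴ + (9/4)p⁵. -/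
open Finset

noncomputable section

lemma sum_pi5'' {M β : Type*} [AddCommMonoid M] [Fintype β] [DecidableEq β]
    (g : (Fin 5 → β) → M) :
    ∑ e : Fin 5 → β, g e = ∑ a, ∑ b, ∑ c, ∑ d, ∑ f, g ![a, b, c, d, f] := by
  let E : (Fin 5 → β) ≃ β × β × β × β × β :=
    { toFun := fun e => (e 0, e 1, e 2, e 3, e 4)
      invFun := fun t => ![t.1, t.2.1, t.2.2.1, t.2.2.2.1, t.2.2.2.2]
      left_inv := fun e => by funext i; fin_cases i <;> rfl
      right_inv := fun t => rfl }
  rw [← E.symm.sum_comp]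
  simp only [Fintype.sum_prod_type]
  rfl

lemma coeff_e : fCoeff 5 maj5 (∅ : Finset (Fin 5)) = 0 := by
  rw [fCoeff, sum_pi5'']
  simp [maj5, Finset.prod_insert, Fintype.sum_bool, _root_.val, sgn]
  try norm_num

lemma coeff_0 : fCoeff 5 maj5 ({0} : Finset (Fin 5)) = 3/8 := by
  rw [fCoeff, sum_pi5'']
  simp [maj5, Finset.prod_insert, Fintype.sum_bool, _root_.val, sgn]
  try norm_num

lemma coeff_1 : fCoeff 5 maj5 ({1} : Finset (Fin 5)) = 3/8 := by
  rw [fCoeff, sum_pi5'']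
  simp [maj5, Finset.prod_insert, Fintype.sum_bool, _root_.val, sgn]
  try norm_num

lemma coeff_2 : fCoeff 5 maj5 ({2} : Finset (Fin 5)) = 3/8 := by
  rw [fCoeff, sum_pi5'']
  simp [maj5, Finset.prod_insert, Fintype.sum_bool, _root_.val, sgn]
  try norm_num

lemma coeff_3 : fCoeff 5 maj5 ({3} : Finset (Fin 5)) = 3/8 := by
  rw [fCoeff, sum_pi5'']
  simp [maj5, Finset.prod_insert, Fintype.sum_bool, _root_.val, sgn]
  try norm_num

lemma coeff_4 : fCoeff 5 maj5 ({4} : Finset (Fin 5)) = 3/8 := by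
  rw [fCoeff, sum_pi5'']
  simp [maj5, Finset.prod_insert, Fintype.sum_bool, _root_.val, sgn]
  try norm_num

lemma coeff_01 : fCoeff 5 maj5 ({0, 1} : Finset (Fin 5)) = 0 := by
  rw [fCoeff, sum_pi5'']
  simp [maj5, Finset.prod_insert, Fintype.sum_bool, _root_.val, sgn]
  try norm_num

lemma coeff_02 : fCoeff 5 maj5 ({0, 2} : Finset (Fin 5)) = 0 := by
  rw [fCoeff, sum_pi5'']
  simp [maj5, Finset.prod_insert, Fintype.sum_bool, _root_.val, sgn]
  try norm_num

lemma coeff_03 : fCoeff 5 maj5 ({0, 3} : Finset (Fin 5)) = 0 := by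
  rw [fCoeff, sum_pi5'']
  simp [maj5, Finset.prod_insert, Fintype.sum_bool, _root_.val, sgn]
  try norm_num

lemma coeff_04 : fCoeff 5 maj5 ({0, 4} : Finset (Fin 5)) = 0 := by
  rw [fCoeff, sum_pi5'']
  simp [maj5, Finset.prod_insert, Fintype.sum_bool, _root_.val, sgn]
  try norm_num

lemma coeff_12 : fCoeff 5 maj5 ({1, 2} : Finset (Fin 5)) = 0 := by
  rw [fCoeff, sum_pi5'']
  simp [maj5, Finset.prod_insert, Fintype.sum_bool, _root_.val, sgn]
  try norm_num

lemma coeff_13 : fCoeff 5 maj5 ({1, 3} : Finset (Fin 5)) = 0 := by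
  rw [fCoeff, sum_pi5'']
  simp [maj5, Finset.prod_insert, Fintype.sum_bool, _root_.val, sgn]
  try norm_num

lemma coeff_14 : fCoeff 5 maj5 ({1, 4} : Finset (Fin 5)) = 0 := by
  rw [fCoeff, sum_pi5'']
  simp [maj5, Finset.prod_insert, Fintype.sum_bool, _root_.val, sgn]
  try norm_num

lemma coeff_23 : fCoeff 5 maj5 ({2, 3} : Finset (Fin 5)) = 0 := by
  rw [fCoeff, sum_pi5'']
  simp [maj5, Finset.prod_insert, Fintype.sum_bool, _root_.val, sgn]
  try norm_num

lemma coeff_24 : fCoeff 5 maj5 ({2, 4} : Finset (Fin 5)) = 0 := by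
  rw [fCoeff, sum_pi5'']
  simp [maj5, Finset.prod_insert, Fintype.sum_bool, _root_.val, sgn]
  try norm_num

lemma coeff_34 : fCoeff 5 maj5 ({3, 4} : Finset (Fin 5)) = 0 := by
  rw [fCoeff, sum_pi5'']
  simp [maj5, Finset.prod_insert, Fintype.sum_bool, _root_.val, sgn]
  try norm_num

lemma coeff_012 : fCoeff 5 maj5 ({0, 1, 2} : Finset (Fin 5)) = -(1/8) := by
  rw [fCoeff, sum_pi5'']
  simp [maj5, Finset.prod_insert, Fintype.sum_bool, _root_.val, sgn]
  try norm_num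

lemma coeff_013 : fCoeff 5 maj5 ({0, 1, 3} : Finset (Fin 5)) = -(1/8) := by
  rw [fCoeff, sum_pi5'']
  simp [maj5, Finset.prod_insert, Fintype.sum_bool, _root_.val, sgn]
  try norm_num

lemma coeff_014 : fCoeff 5 maj5 ({0, 1, 4} : Finset (Fin 5)) = -(1/8) := by
  rw [fCoeff, sum_pi5'']
  simp [maj5, Finset.prod_insert, Fintype.sum_bool, _root_.val, sgn]
  try norm_num

lemma coeff_023 : fCoeff 5 maj5 ({0, 2, 3} : Finset (Fin 5)) = -(1/8) := by
  rw [fCoeff, sum_pi5'']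
  simp [maj5, Finset.prod_insert, Fintype.sum_bool, _root_.val, sgn]
  try norm_num

lemma coeff_024 : fCoeff 5 maj5 ({0, 2, 4} : Finset (Fin 5)) = -(1/8) := by
  rw [fCoeff, sum_pi5'']
  simp [maj5, Finset.prod_insert, Fintype.sum_bool, _root_.val, sgn]
  try norm_num

lemma coeff_034 : fCoeff 5 maj5 ({0, 3, 4} : Finset (Fin 5)) = -(1/8) := by
  rw [fCoeff, sum_pi5'']
  simp [maj5, Finset.prod_insert, Fintype.sum_bool, _root_.val, sgn]
  try norm_num

lemma coeff_123 : fCoeff 5 maj5 ({1, 2, 3} : Finset (Fin 5)) = -(1/8) := by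
  rw [fCoeff, sum_pi5'']
  simp [maj5, Finset.prod_insert, Fintype.sum_bool, _root_.val, sgn]
  try norm_num

lemma coeff_124 : fCoeff 5 maj5 ({1, 2, 4} : Finset (Fin 5)) = -(1/8) := by
  rw [fCoeff, sum_pi5'']
  simp [maj5, Finset.prod_insert, Fintype.sum_bool, _root_.val, sgn]
  try norm_num

lemma coeff_134 : fCoeff 5 maj5 ({1, 3, 4} : Finset (Fin 5)) = -(1/8) := by
  rw [fCoeff, sum_pi5'']
  simp [maj5, Finset.prod_insert, Fintype.sum_bool, _root_.val, sgn]
  try norm_num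

lemma coeff_234 : fCoeff 5 maj5 ({2, 3, 4} : Finset (Fin 5)) = -(1/8) := by
  rw [fCoeff, sum_pi5'']
  simp [maj5, Finset.prod_insert, Fintype.sum_bool, _root_.val, sgn]
  try norm_num

lemma coeff_0123 : fCoeff 5 maj5 ({0, 1, 2, 3} : Finset (Fin 5)) = 0 := by
  rw [fCoeff, sum_pi5'']
  simp [maj5, Finset.prod_insert, Fintype.sum_bool, _root_.val, sgn]
  try norm_num

lemma coeff_0124 : fCoeff 5 maj5 ({0, 1, 2, 4} : Finset (Fin 5)) = 0 := by
  rw [fCoeff, sum_pi5'']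
  simp [maj5, Finset.prod_insert, Fintype.sum_bool, _root_.val, sgn]
  try norm_num

lemma coeff_0134 : fCoeff 5 maj5 ({0, 1, 3, 4} : Finset (Fin 5)) = 0 := by
  rw [fCoeff, sum_pi5'']
  simp [maj5, Finset.prod_insert, Fintype.sum_bool, _root_.val, sgn]
  try norm_num

lemma coeff_0234 : fCoeff 5 maj5 ({0, 2, 3, 4} : Finset (Fin 5)) = 0 := by
  rw [fCoeff, sum_pi5'']
  simp [maj5, Finset.prod_insert, Fintype.sum_bool, _root_.val, sgn]
  try norm_num

lemma coeff_1234 : fCoeff 5 maj5 ({1, 2, 3, 4} : Finset (Fin 5)) = 0 := by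
  rw [fCoeff, sum_pi5'']
  simp [maj5, Finset.prod_insert, Fintype.sum_bool, _root_.val, sgn]
  try norm_num

lemma coeff_01234 : fCoeff 5 maj5 ({0, 1, 2, 3, 4} : Finset (Fin 5)) = 3/8 := by
  rw [fCoeff, sum_pi5'']
  simp [maj5, Finset.prod_insert, Fintype.sum_bool, _root_.val, sgn]
  try norm_num

lemma mlin5_eq (z : Fin 5 → ℝ) :
    mlin 5 maj5 z
      = 3/8 * (z 0 + z 1 + z 2 + z 3 + z 4)
        - 1/8 * (z 0 * z 1 * z 2 + z 0 * z 1 * z 3 + z 0 * z 1 * z 4 + z 0 * z 2 * z 3 + z 0 * z 2 * z 4 + z 0 * z 3 * z 4 + z 1 * z 2 * z 3 + z 1 * z 2 * z 4 + z 1 * z 3 * z 4 + z 2 * z 3 * z 4)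
        + 3/8 * (z 0 * z 1 * z 2 * z 3 * z 4) := by
  rw [mlin, show (univ : Finset (Finset (Fin 5))) = {(∅ : Finset (Fin 5)), {0}, {1}, {2}, {3}, {4}, {0, 1}, {0, 2}, {0, 3}, {0, 4}, {1, 2}, {1, 3}, {1, 4}, {2, 3}, {2, 4}, {3, 4}, {0, 1, 2}, {0, 1, 3}, {0, 1, 4}, {0, 2, 3}, {0, 2, 4}, {0, 3, 4}, {1, 2, 3}, {1, 2, 4}, {1, 3, 4}, {2, 3, 4}, {0, 1, 2, 3}, {0, 1, 2, 4}, {0, 1, 3, 4}, {0, 2, 3, 4}, {1, 2, 3, 4}, {0, 1, 2, 3, 4}} from by decide]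
  repeat rw [Finset.sum_insert (by decide)]
  rw [Finset.sum_singleton]
  simp only [coeff_e, coeff_0, coeff_1, coeff_2, coeff_3, coeff_4, coeff_01, coeff_02, coeff_03, coeff_04, coeff_12, coeff_13, coeff_14, coeff_23, coeff_24, coeff_34, coeff_012, coeff_013, coeff_014, coeff_023, coeff_024, coeff_034, coeff_123, coeff_124, coeff_134, coeff_234, coeff_0123, coeff_0124, coeff_0134, coeff_0234, coeff_1234, coeff_01234]
  simp [Finset.prod_insert]
  ring

set_option maxHeartbeats 2000000 in
theorem stmt7 (p : ℝ) (hp : p ∈ Set.Icc (0 : ℝ) 1) :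
    Phi 5 p maj5
      = 15/8 * p - 15/4 * p ^ 2 + 25/4 * p ^ 3 - 45/8 * p ^ 4 + 9/4 * p ^ 5 := by
  rw [Phi, sum_pi5'']
  simp only [mlin5_eq, Fin.prod_univ_five, Matrix.cons_val_zero, Matrix.cons_val_one,
    Matrix.head_cons, Matrix.cons_val_two, Matrix.tail_cons, Matrix.cons_val_three,
    Matrix.cons_val_four, Matrix.head_fin_const]
  simp only [Fin.sum_univ_three]
  have e0 : eval3 0 = 0 := rfl
  have e1 : eval3 1 = 1 := rfl
  have e2 : eval3 2 = -1 := rfl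
  have w0 : wt p 0 = 1 - p := rfl
  have w1 : wt p 1 = p / 2 := rfl
  have w2 : wt p 2 = p / 2 := rfl
  simp only [e0, e1, e2, w0, w1, w2]
  norm_num [abs_of_nonneg, abs_of_nonpos]
  ring
end
end
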